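/- arXiv:2604.11183 — 2 statements merged into one kernel-verified Lean document; each statement's English description precedes it below -/
import Mathlib

section
/- For Y ~ N(μ, σ²) with σ > 0 and α ∈ (0,1), the entropic value-at-risk EVaR_{1−α}(Y) := inf_{z>0} z⁻¹ ln(M_Y(z)/α), where M_Y(z) = E[e^{zY}] = e^{μz + σ²z²/2}, equals μ + σ·√(−2 ln α). -/
/-- For `Y ~ N(μ, σ²)` with σ > 0 and α ∈ (0,1), the entropic
value-at-risk `inf_{z>0} z⁻¹ ln(M_Y(z)/α)` with
`M_Y(z) = exp(μ z + σ² z²/2)` equals `μ + σ·√(−2 ln α)`. -/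
theorem EVaR_gaussian (m σ α : ℝ) (hσ : 0 < σ) (hα : α ∈ Set.Ioo (0:ℝ) 1) :
    sInf ((fun z : ℝ =>
        z⁻¹ * Real.log (Real.exp (m * z + σ ^ 2 * z ^ 2 / 2) / α)) '' Set.Ioi 0)
      = m + σ * Real.sqrt (-2 * Real.log α) := by
  obtain ⟨hα0, hα1⟩ := hα
  have hc : 0 < -Real.log α := by
    have := Real.log_neg hα0 hα1; linarith
  set c := -Real.log α with hcdef
  set s := Real.sqrt (2 * c) with hsdef
  have hs : 0 < s := Real.sqrt_pos.2 (by linarith)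
  have hs2 : s ^ 2 = 2 * c := Real.sq_sqrt (by linarith)
  have hR : Real.sqrt (-2 * Real.log α) = s := by
    rw [hsdef]; congr 1; rw [hcdef]; ring
  rw [hR]
  have hfeq : ∀ z : ℝ, 0 < z →
      z⁻¹ * Real.log (Real.exp (m * z + σ ^ 2 * z ^ 2 / 2) / α)
        = m + σ ^ 2 * z / 2 + c / z := by
    intro z hz
    rw [Real.log_div (Real.exp_ne_zero _) (ne_of_gt hα0), Real.log_exp]
    rw [hcdef]
    field_simp
    ring
  have hlb : ∀ y ∈ (fun z : ℝ =>
      z⁻¹ * Real.log (Real.exp (m * z + σ ^ 2 * z ^ 2 / 2) / α)) '' Set.Ioi 0,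
      m + σ * s ≤ y := by
    rintro y ⟨z, hz, rfl⟩
    rw [Set.mem_Ioi] at hz
    dsimp only
    rw [hfeq z hz]
    have h1 : (σ * z - s) ^ 2 ≥ 0 := sq_nonneg _
    have h2 : σ ^ 2 * z / 2 + c / z ≥ σ * s := by
      rw [ge_iff_le, ← sub_nonneg]
      have hz' : z ≠ 0 := ne_of_gt hz
      have heq : σ ^ 2 * z / 2 + c / z - σ * s = (σ * z - s) ^ 2 / (2 * z) := by
        field_simp
        linear_combination -hs2
      rw [heq]; positivity
    linarith
  apply le_antisymm
  · apply csInf_le ⟨m + σ * s, hlb⟩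
    refine ⟨s / σ, Set.mem_Ioi.2 (by positivity), ?_⟩
    dsimp only
    rw [hfeq _ (by positivity)]
    have hσ' : σ ≠ 0 := ne_of_gt hσ
    have hs' : s ≠ 0 := ne_of_gt hs
    field_simp
    nlinarith
  · exact le_csInf ⟨_, ⟨1, Set.mem_Ioi.2 one_pos, rfl⟩⟩ hlb
end

section
/- For α ∈ (0,1): φ(Φ⁻¹(1−α))/α ≤ √(−2 ln α), i.e., for a standard Gaussian the conditional value-at-risk is bounded by the entropic value-at-risk: CVaR_{1−α}(N(0,1)) ≤ EVaR_{1−α}(N(0,1)). -/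
/-- Standard normal density φ. -/
noncomputable def stdNormalPDF (x : ℝ) : ℝ :=
  (Real.sqrt (2 * Real.pi))⁻¹ * Real.exp (-(x ^ 2) / 2)

/-- Standard normal cumulative distribution function Φ. -/
noncomputable def stdNormalCDF (x : ℝ) : ℝ :=
  ∫ s in Set.Iic x, stdNormalPDF s

/-- Inverse of the standard normal CDF (quantile function). -/
noncomputable def stdNormalCDFInv (y : ℝ) : ℝ :=
  sInf {x : ℝ | y ≤ stdNormalCDF x}

open MeasureTheory Set Filter Real Topology

namespace CVaRauxlemmas

lemma pdf_eq : stdNormalPDF = fun x => (Real.sqrt (2 * Real.pi))⁻¹ * Real.exp (-(1/2) * x ^ 2) := by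
  funext x
  unfold stdNormalPDF
  ring_nf

lemma sqrt2pi_pos : 0 < Real.sqrt (2 * Real.pi) := Real.sqrt_pos.mpr (by positivity)

lemma pdf_pos (x : ℝ) : 0 < stdNormalPDF x := by
  unfold stdNormalPDF
  have := Real.pi_pos
  positivity

lemma pdf_nonneg (x : ℝ) : 0 ≤ stdNormalPDF x := (pdf_pos x).le

lemma pdf_le (x : ℝ) : stdNormalPDF x ≤ (Real.sqrt (2 * Real.pi))⁻¹ := by
  unfold stdNormalPDF
  have h1 : Real.exp (-(x^2)/2) ≤ 1 := by
    rw [Real.exp_le_one_iff]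
    nlinarith [sq_nonneg x]
  have h2 : (0:ℝ) ≤ (Real.sqrt (2 * Real.pi))⁻¹ := inv_nonneg.mpr sqrt2pi_pos.le
  calc (Real.sqrt (2 * Real.pi))⁻¹ * Real.exp (-(x ^ 2) / 2)
      ≤ (Real.sqrt (2 * Real.pi))⁻¹ * 1 := mul_le_mul_of_nonneg_left h1 h2
    _ = (Real.sqrt (2 * Real.pi))⁻¹ := mul_one _

lemma pdf_continuous : Continuous stdNormalPDF := by
  unfold stdNormalPDF
  fun_prop

lemma integrable_pdf : Integrable stdNormalPDF := by
  rw [pdf_eq]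
  exact (integrable_exp_neg_mul_sq (by norm_num : (0:ℝ) < 1/2)).const_mul _

lemma integral_pdf : ∫ x, stdNormalPDF x = 1 := by
  rw [pdf_eq]
  rw [MeasureTheory.integral_const_mul]
  rw [integral_gaussian]
  rw [show Real.pi / (1/2) = 2 * Real.pi by ring]
  exact inv_mul_cancel₀ (ne_of_gt sqrt2pi_pos)

lemma cdf_mono : Monotone stdNormalCDF := fun x y hxy =>
  setIntegral_mono_set integrable_pdf.integrableOn (ae_of_all _ pdf_nonneg)
    (HasSubset.Subset.eventuallyLE (Iic_subset_Iic.mpr hxy))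

lemma cdf_sub (x y : ℝ) (h : x ≤ y) :
    stdNormalCDF y = stdNormalCDF x + ∫ t in Ioc x y, stdNormalPDF t := by
  unfold stdNormalCDF
  rw [← setIntegral_union (Iic_disjoint_Ioc le_rfl) measurableSet_Ioc
    integrable_pdf.integrableOn integrable_pdf.integrableOn, Iic_union_Ioc_eq_Iic h]

lemma cdf_cont : Continuous stdNormalCDF := by
  have hC0 : 0 ≤ (Real.sqrt (2 * Real.pi))⁻¹ := inv_nonneg.mpr sqrt2pi_pos.le
  have key : ∀ x y : ℝ, x ≤ y →
      stdNormalCDF y - stdNormalCDF x ≤ (Real.sqrt (2 * Real.pi))⁻¹ * (y - x) := by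
    intro x y h
    rw [cdf_sub x y h]
    have h1 : ∫ t in Ioc x y, stdNormalPDF t ≤ ∫ _t in Ioc x y, (Real.sqrt (2 * Real.pi))⁻¹ :=
      setIntegral_mono_on integrable_pdf.integrableOn
        ((integrableOn_const_iff (C := (Real.sqrt (2 * Real.pi))⁻¹)).mpr (Or.inr measure_Ioc_lt_top)) measurableSet_Ioc
        (fun t _ => pdf_le t)
    have h2 : ∫ _t in Ioc x y, (Real.sqrt (2 * Real.pi))⁻¹
        = (y - x) * (Real.sqrt (2 * Real.pi))⁻¹ := by
      rw [setIntegral_const, Real.volume_real_Ioc_of_le h, smul_eq_mul]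
    linarith [h1, h2.le, h2.ge]
  refine (LipschitzWith.of_dist_le_mul
    (K := (Real.sqrt (2 * Real.pi))⁻¹.toNNReal) (f := stdNormalCDF) ?_).continuous
  intro x y
  rw [Real.coe_toNNReal _ hC0, Real.dist_eq, Real.dist_eq]
  rcases le_total x y with h | h
  · have h1 := key x y h
    have h2 : stdNormalCDF x ≤ stdNormalCDF y := cdf_mono h
    rw [abs_of_nonpos (by linarith), abs_of_nonpos (by linarith)]
    linarith
  · have h1 := key y x h
    have h2 : stdNormalCDF y ≤ stdNormalCDF x := cdf_mono h
    rw [abs_of_nonneg (by linarith), abs_of_nonneg (by linarith)]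
    linarith

lemma cdf_tendsto_atTop : Tendsto stdNormalCDF atTop (𝓝 1) := by
  have h := tendsto_setIntegral_of_monotone (μ := (volume : Measure ℝ))
    (f := stdNormalPDF) (s := fun r : ℝ => Iic r)
    (fun r => measurableSet_Iic) (fun a b hab => Iic_subset_Iic.mpr hab)
    (integrable_pdf.integrableOn)
  rw [iUnion_Iic, setIntegral_univ, integral_pdf] at h
  exact h

lemma cdf_tendsto_atBot : Tendsto stdNormalCDF atBot (𝓝 0) := by
  have h := tendsto_setIntegral_of_antitone (μ := (volume : Measure ℝ))
    (f := stdNormalPDF) (s := fun r : ℝ => Iic (-r))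
    (fun r => measurableSet_Iic)
    (fun a b hab => Iic_subset_Iic.mpr (neg_le_neg hab))
    ⟨0, integrable_pdf.integrableOn⟩
  have hempty : ⋂ r : ℝ, Iic (-r) = (∅ : Set ℝ) := by
    ext x
    simp only [mem_iInter, mem_Iic, mem_empty_iff_false, iff_false]
    push_neg
    exact ⟨-(x - 1), by linarith⟩
  rw [hempty] at h
  simp only [Measure.restrict_empty, integral_zero_measure] at h
  have h2 := h.comp tendsto_neg_atBot_atTop
  simp only [Function.comp_def, neg_neg] at h2
  exact h2

lemma cdf_inv_spec {p : ℝ} (hp0 : 0 < p) (hp1 : p < 1) :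
    stdNormalCDF (stdNormalCDFInv p) = p := by
  obtain ⟨b, hb⟩ : ∃ b, p < stdNormalCDF b :=
    (cdf_tendsto_atTop.eventually (eventually_gt_nhds hp1)).exists
  obtain ⟨a, ha⟩ : ∃ a, stdNormalCDF a < p :=
    (cdf_tendsto_atBot.eventually (eventually_lt_nhds hp0)).exists
  have hab : a ≤ b := by
    by_contra hltb
    push_neg at hltb
    have := cdf_mono hltb.le
    linarith
  obtain ⟨x0, _, hx0⟩ := intermediate_value_Icc hab cdf_cont.continuousOn ⟨ha.le, hb.le⟩
  have hSne : {x : ℝ | p ≤ stdNormalCDF x}.Nonempty := ⟨x0, hx0.ge⟩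
  have hbdd : BddBelow {x : ℝ | p ≤ stdNormalCDF x} := by
    refine ⟨a, fun x hx => ?_⟩
    by_contra hxa
    push_neg at hxa
    have h1 : stdNormalCDF x ≤ stdNormalCDF a := cdf_mono hxa.le
    have h2 : p ≤ stdNormalCDF x := hx
    linarith
  have hclosed : IsClosed {x : ℝ | p ≤ stdNormalCDF x} := isClosed_le continuous_const cdf_cont
  have hmem := hclosed.csInf_mem hSne hbdd
  have h1 : p ≤ stdNormalCDF (stdNormalCDFInv p) := hmem
  have h2 : stdNormalCDFInv p ≤ x0 := csInf_le hbdd hx0.ge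
  have h3 : stdNormalCDF (stdNormalCDFInv p) ≤ stdNormalCDF x0 := cdf_mono h2
  rw [hx0] at h3
  linarith

lemma integrable_mul_pdf : Integrable (fun x => x * stdNormalPDF x) := by
  rw [pdf_eq]
  have h := (integrable_mul_exp_neg_mul_sq (by norm_num : (0:ℝ) < 1/2)).const_mul
    ((Real.sqrt (2 * Real.pi))⁻¹)
  have heq : (fun x : ℝ => (Real.sqrt (2 * Real.pi))⁻¹ * (x * Real.exp (-(1/2) * x ^ 2)))
      = fun x : ℝ => x * ((Real.sqrt (2 * Real.pi))⁻¹ * Real.exp (-(1/2) * x ^ 2)) := by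
    funext x; ring
  rw [heq] at h
  exact h

lemma pdf_deriv (x : ℝ) : HasDerivAt (fun y => -stdNormalPDF y) (x * stdNormalPDF x) x := by
  have h1 : HasDerivAt (fun y : ℝ => -(y ^ 2) / 2) (-x) x := by
    have h : HasDerivAt (fun y : ℝ => -(y ^ 2 / 2)) _ x := ((hasDerivAt_pow 2 x).div_const 2).neg
    have heq : (fun y : ℝ => -(y ^ 2 / 2)) = fun y : ℝ => -(y ^ 2) / 2 := by
      funext y; ring
    rw [heq] at h
    convert h using 1
    simp
  have h2 := h1.exp
  have h3 : HasDerivAt (fun y : ℝ => -((Real.sqrt (2 * Real.pi))⁻¹ * Real.exp (-(y ^ 2) / 2))) _ x :=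
    (h2.const_mul ((Real.sqrt (2 * Real.pi))⁻¹)).neg
  have heq : (fun y : ℝ => -((Real.sqrt (2 * Real.pi))⁻¹ * Real.exp (-(y ^ 2) / 2)))
      = fun y => -stdNormalPDF y := by
    funext y; rw [stdNormalPDF]
  rw [heq] at h3
  convert h3 using 1
  rw [stdNormalPDF]
  ring

lemma pdf_tendsto_zero : Tendsto (fun y => -stdNormalPDF y) atTop (𝓝 0) := by
  rw [pdf_eq]
  have h1 : Tendsto (fun y : ℝ => (1/2) * y ^ 2) atTop atTop :=
    (tendsto_pow_atTop (two_ne_zero)).const_mul_atTop (by norm_num)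
  have h2 : Tendsto (fun y : ℝ => -(1/2) * y ^ 2) atTop atBot := by
    have := tendsto_neg_atTop_atBot.comp h1
    simp only [Function.comp_def] at this
    convert this using 2 with y
    ring
  have h3 : Tendsto (fun y : ℝ => Real.exp (-(1/2) * y ^ 2)) atTop (𝓝 0) :=
    Real.tendsto_exp_atBot.comp h2
  have h4 := (h3.const_mul ((Real.sqrt (2 * Real.pi))⁻¹)).neg
  simpa using h4

lemma mean_tail (q : ℝ) : ∫ x in Ioi q, x * stdNormalPDF x = stdNormalPDF q := by
  have h := integral_Ioi_of_hasDerivAt_of_tendsto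
    (f := fun y => -stdNormalPDF y) (f' := fun x => x * stdNormalPDF x) (a := q)
    (pdf_continuous.neg.continuousWithinAt)
    (fun x _ => pdf_deriv x)
    integrable_mul_pdf.integrableOn
    pdf_tendsto_zero
  simpa using h

lemma exp_mul_pdf_eq (t : ℝ) : (fun x => Real.exp (t * x) * stdNormalPDF x)
    = fun x => ((Real.sqrt (2 * Real.pi))⁻¹ * Real.exp (t ^ 2 / 2))
        * Real.exp (-(1/2) * (x - t) ^ 2) := by
  funext x
  rw [congrFun pdf_eq x]
  have h : Real.exp (t * x) * Real.exp (-(1/2) * x ^ 2)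
      = Real.exp (t ^ 2 / 2) * Real.exp (-(1/2) * (x - t) ^ 2) := by
    rw [← Real.exp_add, ← Real.exp_add]
    congr 1
    ring
  calc Real.exp (t * x) * ((Real.sqrt (2 * Real.pi))⁻¹ * Real.exp (-(1/2) * x ^ 2))
      = (Real.sqrt (2 * Real.pi))⁻¹ * (Real.exp (t * x) * Real.exp (-(1/2) * x ^ 2)) := by ring
    _ = (Real.sqrt (2 * Real.pi))⁻¹
        * (Real.exp (t ^ 2 / 2) * Real.exp (-(1/2) * (x - t) ^ 2)) := by rw [h]
    _ = ((Real.sqrt (2 * Real.pi))⁻¹ * Real.exp (t ^ 2 / 2))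
        * Real.exp (-(1/2) * (x - t) ^ 2) := by ring

lemma integrable_exp_mul_pdf (t : ℝ) : Integrable fun x => Real.exp (t * x) * stdNormalPDF x := by
  rw [exp_mul_pdf_eq t]
  have hbase : Integrable (fun x : ℝ => Real.exp (-(1/2) * x ^ 2)) :=
    integrable_exp_neg_mul_sq (by norm_num)
  have h := ((measurePreserving_sub_right (volume : Measure ℝ) t).integrable_comp
    hbase.aestronglyMeasurable).mpr hbase
  simp only [Function.comp_def] at h
  exact h.const_mul _

lemma mgf_pdf (t : ℝ) : ∫ x, Real.exp (t * x) * stdNormalPDF x = Real.exp (t ^ 2 / 2) := by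
  rw [exp_mul_pdf_eq t]
  rw [MeasureTheory.integral_const_mul]
  rw [show (∫ x : ℝ, Real.exp (-(1/2) * (x - t) ^ 2))
      = ∫ x : ℝ, Real.exp (-(1/2) * x ^ 2) from
    integral_sub_right_eq_self (fun u => Real.exp (-(1/2) * u ^ 2)) t]
  rw [integral_gaussian]
  rw [show Real.pi / (1/2) = 2 * Real.pi by ring]
  rw [show (Real.sqrt (2 * Real.pi))⁻¹ * Real.exp (t ^ 2 / 2) * Real.sqrt (2 * Real.pi)
      = Real.exp (t ^ 2 / 2) * ((Real.sqrt (2 * Real.pi))⁻¹ * Real.sqrt (2 * Real.pi)) by ring]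
  rw [inv_mul_cancel₀ (ne_of_gt sqrt2pi_pos), mul_one]

lemma integrable_max_pdf (z : ℝ) : Integrable fun x => max (x - z) 0 * stdNormalPDF x := by
  apply Integrable.mono' (((integrable_exp_mul_pdf 1).const_mul (Real.exp (-z))))
  · exact ((continuous_id.sub continuous_const).max continuous_const).mul
      pdf_continuous |>.aestronglyMeasurable
  · refine ae_of_all _ fun x => ?_
    rw [Real.norm_eq_abs, abs_of_nonneg (mul_nonneg (le_max_right _ _) (pdf_nonneg x))]
    have h1 : max (x - z) 0 ≤ Real.exp (-z) * Real.exp (1 * x) := by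
      rw [← Real.exp_add]
      apply max_le
      · have := Real.add_one_le_exp (-z + 1 * x)
        linarith
      · exact (Real.exp_pos _).le
    calc max (x - z) 0 * stdNormalPDF x
        ≤ (Real.exp (-z) * Real.exp (1 * x)) * stdNormalPDF x :=
          mul_le_mul_of_nonneg_right h1 (pdf_nonneg x)
      _ = Real.exp (-z) * (Real.exp (1 * x) * stdNormalPDF x) := by ring

end CVaRauxlemmas

open CVaRauxlemmas

/-- For α ∈ (0,1), `φ(Φ⁻¹(1−α))/α ≤ √(−2 ln α)`, i.e.
`CVaR_{1−α}(N(0,1)) ≤ EVaR_{1−α}(N(0,1))`. -/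
theorem CVaR_le_EVaR_std_gaussian (α : ℝ) (hα : α ∈ Set.Ioo (0:ℝ) 1) :
    stdNormalPDF (stdNormalCDFInv (1 - α)) / α ≤ Real.sqrt (-2 * Real.log α) := by
  obtain ⟨hα0, hα1⟩ := hα
  set q := stdNormalCDFInv (1 - α) with hqdef
  have hcdfq : stdNormalCDF q = 1 - α := cdf_inv_spec (by linarith) (by linarith)
  -- tail mass
  have htail : ∫ x in Ioi q, stdNormalPDF x = α := by
    have hu : ∫ x in Iic q ∪ Ioi q, stdNormalPDF x
        = (∫ x in Iic q, stdNormalPDF x) + ∫ x in Ioi q, stdNormalPDF x :=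
      setIntegral_union (Iic_disjoint_Ioi le_rfl) measurableSet_Ioi
        integrable_pdf.integrableOn integrable_pdf.integrableOn
    rw [Iic_union_Ioi, setIntegral_univ, integral_pdf] at hu
    have : stdNormalCDF q = ∫ x in Iic q, stdNormalPDF x := rfl
    rw [← this, hcdfq] at hu
    linarith
  have hlog : Real.log α < 0 := Real.log_neg hα0 hα1
  set s := Real.sqrt (-2 * Real.log α) with hsdef
  have hs2 : s ^ 2 = -2 * Real.log α := Real.sq_sqrt (by linarith)
  have hspos : 0 < s := Real.sqrt_pos.mpr (by linarith)
  have hexpα : Real.exp (-(s ^ 2) / 2) = α := by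
    rw [hs2, show -(-2 * Real.log α) / 2 = Real.log α by ring, Real.exp_log hα0]
  -- value identity : ∫ max(x-q,0) pdf = pdf q - q * α
  have hFq : ∫ x, max (x - q) 0 * stdNormalPDF x = stdNormalPDF q - q * α := by
    have hsplit : (∫ x in Iic q, max (x - q) 0 * stdNormalPDF x)
        + (∫ x in (Iic q)ᶜ, max (x - q) 0 * stdNormalPDF x)
        = ∫ x, max (x - q) 0 * stdNormalPDF x :=
      integral_add_compl measurableSet_Iic (integrable_max_pdf q)
    rw [compl_Iic] at hsplit
    have h0 : ∫ x in Iic q, max (x - q) 0 * stdNormalPDF x = 0 := by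
      rw [setIntegral_congr_fun measurableSet_Iic
        (g := fun _ => (0:ℝ)) (fun x hx => by
          rw [max_eq_right (sub_nonpos.mpr hx), zero_mul])]
      simp
    have h1 : ∫ x in Ioi q, max (x - q) 0 * stdNormalPDF x
        = ∫ x in Ioi q, (x * stdNormalPDF x - q * stdNormalPDF x) := by
      apply setIntegral_congr_fun measurableSet_Ioi
      intro x hx
      dsimp only
      rw [max_eq_left (sub_nonneg.mpr (le_of_lt hx)), sub_mul]
    have h2 : ∫ x in Ioi q, (x * stdNormalPDF x - q * stdNormalPDF x)
        = (∫ x in Ioi q, x * stdNormalPDF x) - q * ∫ x in Ioi q, stdNormalPDF x := by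
      rw [integral_sub integrable_mul_pdf.integrableOn
        ((integrable_pdf.const_mul q).integrableOn), MeasureTheory.integral_const_mul]
    rw [h0, h1, h2, mean_tail q, htail] at hsplit
    linarith
  -- comparison with shifted threshold z
  have hz : ∀ z : ℝ, ∫ x, max (x - q) 0 * stdNormalPDF x
      ≤ (∫ x, max (x - z) 0 * stdNormalPDF x) + (z - q) * α := by
    intro z
    have hgint : Integrable (fun x => max (x - z) 0 * stdNormalPDF x
        + (Ici q).indicator (fun x => (z - q) * stdNormalPDF x) x) :=
      (integrable_max_pdf z).add
        ((integrable_pdf.const_mul (z - q)).indicator measurableSet_Ici)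
    have hineq : ∀ x : ℝ, max (x - q) 0 * stdNormalPDF x
        ≤ max (x - z) 0 * stdNormalPDF x
          + (Ici q).indicator (fun x => (z - q) * stdNormalPDF x) x := by
      intro x
      by_cases hx : q ≤ x
      · rw [indicator_of_mem (mem_Ici.mpr hx)]
        rw [max_eq_left (sub_nonneg.mpr hx)]
        have h2 : x - q ≤ max (x - z) 0 + (z - q) := by
          have := le_max_left (x - z) (0:ℝ)
          linarith
        calc (x - q) * stdNormalPDF x
            ≤ (max (x - z) 0 + (z - q)) * stdNormalPDF x :=
              mul_le_mul_of_nonneg_right h2 (pdf_nonneg x)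
          _ = max (x - z) 0 * stdNormalPDF x + (z - q) * stdNormalPDF x := by ring
      · rw [indicator_of_notMem (by simpa using hx), add_zero]
        apply mul_le_mul_of_nonneg_right ?_ (pdf_nonneg x)
        push_neg at hx
        rw [max_eq_right (by linarith)]
        exact le_max_right _ _
    have hmono := integral_mono_of_nonneg
      (ae_of_all _ fun x => mul_nonneg (le_max_right _ _) (pdf_nonneg x))
      hgint (ae_of_all _ hineq)
    rw [integral_add (integrable_max_pdf z)
      ((integrable_pdf.const_mul (z - q)).indicator measurableSet_Ici)] at hmono
    rw [integral_indicator measurableSet_Ici, MeasureTheory.integral_const_mul,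
      integral_Ici_eq_integral_Ioi, htail] at hmono
    exact hmono
  -- exponential bound
  have hD : ∀ z : ℝ, ∫ x, max (x - z) 0 * stdNormalPDF x
      ≤ Real.exp (-(s * z) - 1) / s * Real.exp (s ^ 2 / 2) := by
    intro z
    have hptwise : ∀ x : ℝ, max (x - z) 0 * stdNormalPDF x
        ≤ (Real.exp (-(s * z) - 1) / s) * (Real.exp (s * x) * stdNormalPDF x) := by
      intro x
      have h1 : max (x - z) 0 ≤ Real.exp (s * (x - z) - 1) / s := by
        apply max_le
        · rw [le_div_iff₀ hspos]
          have := Real.add_one_le_exp (s * (x - z) - 1)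
          nlinarith
        · positivity
      calc max (x - z) 0 * stdNormalPDF x
          ≤ (Real.exp (s * (x - z) - 1) / s) * stdNormalPDF x :=
            mul_le_mul_of_nonneg_right h1 (pdf_nonneg x)
        _ = (Real.exp (-(s * z) - 1) / s) * (Real.exp (s * x) * stdNormalPDF x) := by
            rw [show s * (x - z) - 1 = (-(s * z) - 1) + s * x by ring, Real.exp_add]
            ring
    have hmono := integral_mono_of_nonneg
      (ae_of_all _ fun x => mul_nonneg (le_max_right _ _) (pdf_nonneg x))
      ((integrable_exp_mul_pdf s).const_mul _) (ae_of_all _ hptwise)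
    rw [MeasureTheory.integral_const_mul, mgf_pdf s] at hmono
    exact hmono
  -- assemble with z = s - 1/s
  set z := s - 1/s with hzdef
  have hsz : s * z = s ^ 2 - 1 := by
    rw [hzdef]
    field_simp
  have hval : Real.exp (-(s * z) - 1) / s * Real.exp (s ^ 2 / 2) = α / s := by
    rw [hsz, div_mul_eq_mul_div, ← Real.exp_add,
      show -(s ^ 2 - 1) - 1 + s ^ 2 / 2 = -(s ^ 2) / 2 by ring, hexpα]
  have hchain : stdNormalPDF q - q * α ≤ α / s + (z - q) * α := by
    have h1 := hz z
    have h2 := hD z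
    rw [hval] at h2
    rw [hFq] at h1
    exact h1.trans (add_le_add_left h2 _)
  rw [div_le_iff₀ hα0]
  have hfinal : α / s + (z - q) * α + q * α = s * α := by
    rw [hzdef]
    field_simp
    ring
  nlinarith [hchain, hfinal]
end
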